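/- arXiv:2211.09801 — 3 statements merged into one kernel-verified Lean document; each statement's English description precedes it below -/
import Mathlib

section
/- For the Cefalú quartic polynomial p_λ with λ = 3/2, every point of the form [±1:±1:0:0] (and its coordinate permutations) is a singular point of the hypersurface {p_{3/2} = 0} ⊂ ℙ³, and these give exactly 12 points of ℙ³. -/
open scoped BigOperators

/-- The Cefalú family of quartic polynomials. -/
noncomputable def cefalu (lam : ℂ) (z : Fin 4 → ℂ) : ℂ :=
  (∑ i, z i ^ 4) - (lam / 3) * (∑ i, z i ^ 2) ^ 2

/-- Partial derivative of `cefalu lam` in the `i`-th coordinate. -/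
noncomputable def cefaluPartial (lam : ℂ) (z : Fin 4 → ℂ) (i : Fin 4) : ℂ :=
  deriv (fun t => cefalu lam (Function.update z i t)) (z i)

/-- Points of the form `[±1:±1:0:0]` and coordinate permutations thereof. -/
def twoSignPoints : Set (Fin 4 → ℂ) :=
  {z | ∃ i j : Fin 4, i ≠ j ∧ (z i = 1 ∨ z i = -1) ∧ (z j = 1 ∨ z j = -1) ∧
        ∀ k, k ≠ i → k ≠ j → z k = 0}

/-!
Each coordinate of a point of `twoSignPoints` lies in `{0, 1, -1}`, so `z k ^ 3 = z k` and
`∑ z i ^ 4 = ∑ z i ^ 2 = 2`. Since `∂ₖ p_λ = 4 z_k ^ 3 - (4λ/3) (∑ z i ^ 2) z_k`, both `p_{3/2}`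
and its gradient vanish there. Every such point of `ℙ³` has exactly one representative
`e_i ± e_j` with `i < j`, which gives `6 · 2 = 12` points.
-/

open Function

lemma sum_update_pow {ι : Type*} [Fintype ι] [DecidableEq ι] (z : ι → ℂ) (k : ι) (t : ℂ)
    (n : ℕ) :
    ∑ i, update z k t i ^ n = t ^ n + ((∑ i, z i ^ n) - z k ^ n) := by
  rw [Finset.sum_congr rfl fun i _ => apply_update (fun _ x => x ^ n) z k t i,
    Finset.sum_update_of_mem (Finset.mem_univ k),
    Finset.sum_sdiff_eq_sub (Finset.singleton_subset_iff.mpr (Finset.mem_univ k)),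
    Finset.sum_singleton]

lemma hasDerivAt_sum_update_pow {ι : Type*} [Fintype ι] [DecidableEq ι] (z : ι → ℂ) (k : ι)
    (n : ℕ) (t : ℂ) :
    HasDerivAt (fun t => ∑ i, update z k t i ^ n) (n * t ^ (n - 1)) t := by
  simp_rw [sum_update_pow]
  exact (hasDerivAt_pow n t).add_const _

lemma cefaluPartial_eq (lam : ℂ) (z : Fin 4 → ℂ) (k : Fin 4) :
    cefaluPartial lam z k = 4 * z k ^ 3 - 4 * lam / 3 * (∑ i, z i ^ 2) * z k := by
  have h := (hasDerivAt_sum_update_pow z k 4 (z k)).sub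
    (((hasDerivAt_sum_update_pow z k 2 (z k)).pow 2).const_mul (lam / 3))
  refine h.deriv.trans ?_
  simp only [update_eq_self]
  push_cast
  ring

lemma cefalu_three_halves_singular {z : Fin 4 → ℂ} (hcube : ∀ k, z k ^ 3 = z k)
    (hsq : ∑ i, z i ^ 2 = 2) :
    cefalu (3 / 2) z = 0 ∧ ∀ k, cefaluPartial (3 / 2) z k = 0 := by
  have hquartic : ∑ i, z i ^ 4 = 2 := by
    rw [← hsq]
    exact Finset.sum_congr rfl fun k _ => by rw [pow_succ, hcube, ← pow_two]
  refine ⟨by rw [cefalu, hquartic, hsq]; norm_num, fun k => ?_⟩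
  rw [cefaluPartial_eq, hsq, hcube]
  ring

namespace twoSignPoints

variable {z : Fin 4 → ℂ}

lemma pow_three_eq_self (hz : z ∈ twoSignPoints) (k : Fin 4) : z k ^ 3 = z k := by
  obtain ⟨i, j, -, hi, hj, h0⟩ := hz
  by_cases hki : k = i
  · subst hki; rcases hi with h | h <;> rw [h] <;> norm_num
  by_cases hkj : k = j
  · subst hkj; rcases hj with h | h <;> rw [h] <;> norm_num
  rw [h0 k hki hkj]; norm_num

lemma sum_sq (hz : z ∈ twoSignPoints) : ∑ i, z i ^ 2 = 2 := by
  obtain ⟨i, j, hij, hi, hj, h0⟩ := hz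
  rw [Fintype.sum_eq_add i j hij fun k hk => by rw [h0 k hk.1 hk.2]; norm_num]
  rcases hi with hi | hi <;> rcases hj with hj | hj <;> rw [hi, hj] <;> norm_num

end twoSignPoints

/-- `(⟨(i, j), _⟩, s)` encodes `e_i + e_j` if `s` and `e_i - e_j` otherwise. -/
abbrev TwoSignIndex := {p : Fin 4 × Fin 4 // p.1 < p.2} × Bool

namespace TwoSignIndex

-- Integer coordinates make the injectivity check below decidable.
def intVec (a : TwoSignIndex) : Fin 4 → ℤ := fun k =>
  if k = a.1.1.1 then 1 else if k = a.1.1.2 then (if a.2 then 1 else -1) else 0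

lemma eq_of_intVec_eq_mul :
    ∀ a b : TwoSignIndex, (∀ k, intVec a k = intVec a b.1.1.1 * intVec b k) → a = b := by
  decide

noncomputable def vec (a : TwoSignIndex) : Fin 4 → ℂ := fun k => (intVec a k : ℂ)

lemma vec_fst (a : TwoSignIndex) : vec a a.1.1.1 = 1 := by simp [vec, intVec]

lemma vec_ne_zero (a : TwoSignIndex) : vec a ≠ 0 :=
  fun h => one_ne_zero ((vec_fst a).symm.trans (congrFun h _))

lemma vec_mem (a : TwoSignIndex) : vec a ∈ twoSignPoints := by
  obtain ⟨⟨⟨i, j⟩, hij⟩, s⟩ := a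
  refine ⟨i, j, hij.ne, ?_, ?_, fun k hki hkj => ?_⟩ <;>
    cases s <;> simp [vec, intVec, hij.ne', *]

noncomputable def point (a : TwoSignIndex) : Projectivization ℂ (Fin 4 → ℂ) :=
  Projectivization.mk ℂ (vec a) (vec_ne_zero a)

lemma point_injective : Injective point := by
  intro a b h
  obtain ⟨c, hc⟩ := (Projectivization.mk_eq_mk_iff' ℂ _ _ _ _).mp h
  have hc_eq : vec a b.1.1.1 = c := by rw [← hc, Pi.smul_apply, vec_fst, smul_eq_mul, mul_one]
  refine eq_of_intVec_eq_mul a b fun k => ?_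
  have := congrFun hc k
  rw [Pi.smul_apply, smul_eq_mul, ← hc_eq] at this
  simp only [vec] at this
  exact_mod_cast this.symm

lemma eq_smul_vec {z : Fin 4 → ℂ} {i j : Fin 4} (hij : i < j) (hi : z i = 1 ∨ z i = -1)
    (hj : z j = 1 ∨ z j = -1) (h0 : ∀ k, k ≠ i → k ≠ j → z k = 0) :
    z = z i • vec ⟨⟨(i, j), hij⟩, decide (z j = z i)⟩ := by
  funext k
  by_cases hki : k = i
  · subst hki; simp [vec, intVec]
  by_cases hkj : k = j
  · subst hkj
    rcases hi with hi | hi <;> rcases hj with hj | hj <;> simp [vec, intVec, hki, hi, hj]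
  · simp [vec, intVec, hki, hkj, h0 k hki hkj]

end TwoSignIndex

open TwoSignIndex in
lemma setOf_mk_mem_twoSignPoints_eq_range_point :
    {x : Projectivization ℂ (Fin 4 → ℂ) |
      ∃ z : Fin 4 → ℂ, ∃ hz : z ≠ 0, z ∈ twoSignPoints ∧ x = Projectivization.mk ℂ z hz} =
      Set.range point := by
  ext x
  constructor
  · rintro ⟨z, hz, ⟨i, j, hij, hi, hj, h0⟩, rfl⟩
    wlog hlt : i < j generalizing i j
    · exact this j i hij.symm hj hi (fun k hkj hki => h0 k hki hkj)
        (hij.lt_or_gt.resolve_left hlt)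
    exact ⟨_, ((Projectivization.mk_eq_mk_iff' ℂ _ _ _ _).mpr
      ⟨z i, (eq_smul_vec hlt hi hj h0).symm⟩).symm⟩
  · rintro ⟨a, rfl⟩
    exact ⟨vec a, vec_ne_zero a, vec_mem a, rfl⟩

/-- At `λ = 3/2`, every point of the form `[±1:±1:0:0]` (up to coordinate
permutation) is a singular point of `{p_{3/2} = 0}`, and these give exactly
`12` points of `ℙ³`. -/
theorem cefalu_singularities_three_halves :
    (∀ z ∈ twoSignPoints,
        cefalu (3 / 2) z = 0 ∧ ∀ k, cefaluPartial (3 / 2) z k = 0) ∧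
      Set.ncard {x : Projectivization ℂ (Fin 4 → ℂ) |
        ∃ z : Fin 4 → ℂ, ∃ hz : z ≠ 0, z ∈ twoSignPoints ∧
          x = Projectivization.mk ℂ z hz} = 12 := by
  refine ⟨fun z hz => cefalu_three_halves_singular (twoSignPoints.pow_three_eq_self hz)
    (twoSignPoints.sum_sq hz), ?_⟩
  rw [setOf_mk_mem_twoSignPoints_eq_range_point,
    Set.ncard_range_of_injective TwoSignIndex.point_injective, Nat.card_eq_fintype_card]
  rfl
end

section
/- The Dwork quartic polynomial q_ψ(z) = z_0^4 + z_1^4 + z_2^4 + z_3^4 - 4ψ z_0 z_1 z_2 z_3 fails to be transverse (i.e., {q_ψ = 0} has a singular point with all coordinates nonzero) if and only if ψ^4 = 1. -/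
open scoped BigOperators

/-- The Dwork family of quartic polynomials. -/
noncomputable def dworkQuartic (psi : ℂ) (z : Fin 4 → ℂ) : ℂ :=
  (∑ i, z i ^ 4) - 4 * psi * ∏ i, z i

/-- Partial derivative of `dworkQuartic psi` in the `i`-th coordinate. -/
noncomputable def dworkQuarticPartial (psi : ℂ) (z : Fin 4 → ℂ) (i : Fin 4) : ℂ :=
  deriv (fun t => dworkQuartic psi (Function.update z i t)) (z i)

lemma dwork_partial_eq (psi : ℂ) (z : Fin 4 → ℂ) (i : Fin 4) :
    dworkQuarticPartial psi z i
      = 4 * z i ^ 3 - 4 * psi * ∏ j ∈ Finset.univ.erase i, z j := by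
  set c : ℂ := 4 * psi * ∏ j ∈ Finset.univ.erase i, z j with hc
  have hfun : ∀ t : ℂ, dworkQuartic psi (Function.update z i t)
      = t ^ 4 + (∑ j ∈ Finset.univ.erase i, z j ^ 4) - c * t := by
    intro t
    unfold dworkQuartic
    rw [Finset.prod_update_of_mem (Finset.mem_univ i)]
    have hsum : ∑ j, Function.update z i t j ^ 4
        = t ^ 4 + ∑ j ∈ Finset.univ.erase i, z j ^ 4 := by
      rw [Finset.erase_eq,
        ← Finset.sum_update_of_mem (f := fun j => z j ^ 4) (Finset.mem_univ i) (t ^ 4)]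
      refine Finset.sum_congr rfl fun j _ => ?_
      rcases eq_or_ne j i with h | h
      · subst h; simp
      · simp [Function.update_of_ne h]
    rw [hsum, hc, Finset.erase_eq]; ring
  have hd : HasDerivAt (fun t : ℂ => t ^ 4 + (∑ j ∈ Finset.univ.erase i, z j ^ 4) - c * t)
      ((4 : ℕ) * z i ^ 3 - c * 1) (z i) :=
    (((hasDerivAt_pow 4 (z i)).add_const _).sub ((hasDerivAt_id' (z i)).const_mul c))
  unfold dworkQuarticPartial
  simp only [hfun]
  rw [hd.deriv]
  push_cast
  ring

lemma dwork_partial_eq' (psi : ℂ) (z : Fin 4 → ℂ) (i : Fin 4) (h : z i ≠ 0) :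
    dworkQuarticPartial psi z i
      = (z i)⁻¹ * (4 * z i ^ 4 - 4 * psi * ∏ j, z j) := by
  rw [dwork_partial_eq, ← Finset.mul_prod_erase _ _ (Finset.mem_univ i)]
  field_simp

/-- The Dwork quartic fails to be transverse — i.e. `{q_ψ = 0}` has a singular
point, which necessarily has all coordinates nonzero — iff `ψ⁴ = 1`. -/
theorem dworkQuartic_singular_iff (psi : ℂ) :
    (∃ z : Fin 4 → ℂ, z ≠ 0 ∧ (∀ i, z i ≠ 0) ∧ dworkQuartic psi z = 0 ∧
        ∀ i, dworkQuarticPartial psi z i = 0) ↔ psi ^ 4 = 1 := by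
  constructor
  · rintro ⟨z, -, hz, -, hpar⟩
    set P : ℂ := ∏ j, z j with hP
    have hPne : P ≠ 0 := Finset.prod_ne_zero_iff.2 fun i _ => hz i
    have key : ∀ i, z i ^ 4 = psi * P := by
      intro i
      have h0 := hpar i
      rw [dwork_partial_eq' psi z i (hz i)] at h0
      rcases mul_eq_zero.1 h0 with h | h
      · exact absurd (inv_eq_zero.1 h) (hz i)
      · have h4 : 4 * z i ^ 4 = 4 * (psi * P) := by linear_combination h
        exact mul_left_cancel₀ (by norm_num) h4
    have h1 : P ^ 4 = (psi * P) ^ 4 := by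
      calc P ^ 4 = ∏ i, z i ^ 4 := by rw [hP, Finset.prod_pow]
        _ = ∏ _i : Fin 4, psi * P := Finset.prod_congr rfl fun i _ => key i
        _ = (psi * P) ^ 4 := by simp
    have h2 : psi ^ 4 * P ^ 4 = 1 * P ^ 4 := by linear_combination -h1
    exact mul_right_cancel₀ (pow_ne_zero 4 hPne) h2
  · intro hpsi
    have hψ : psi ≠ 0 := by rintro rfl; norm_num at hpsi
    have hinv : psi⁻¹ ^ 4 = 1 := by
      rw [inv_pow, hpsi]; norm_num
    refine ⟨![psi⁻¹, 1, 1, 1], ?_, ?_, ?_, ?_⟩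
    · intro h
      have := congrFun h 1
      norm_num at this
    · intro i
      fin_cases i <;> simp [hψ]
    · unfold dworkQuartic
      rw [Fin.sum_univ_four, Fin.prod_univ_four]
      simp [hinv, hψ]; norm_num
    · intro i
      rw [dwork_partial_eq' psi _ i (by fin_cases i <;> simp [hψ])]
      rw [Fin.prod_univ_four]
      fin_cases i <;> simp [hinv, hψ]
end

section
/- The Dwork quintic polynomial Q_ψ(z) = Σ_{i=0}^4 z_i^5 - 5ψ ∏_{i=0}^4 z_i defines a singular hypersurface in ℙ⁴ if and only if ψ^5 = 1 (for ψ ∈ ℂ finite); equivalently, there exists nonzero z ∈ ℂ⁵ with Q_ψ(z) = 0 and z_i⁴ = ψ ∏_{j≠i} z_j for all i exactly when ψ⁵ = 1. -/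
open scoped BigOperators

/-- The Dwork family of quintic polynomials. -/
noncomputable def dworkQuintic (psi : ℂ) (z : Fin 5 → ℂ) : ℂ :=
  (∑ i, z i ^ 5) - 5 * psi * ∏ i, z i

/-- The Dwork quintic hypersurface in `ℙ⁴` is singular — i.e. there is a
nonzero `z` with `Q_ψ(z) = 0` and `zᵢ⁴ = ψ ∏_{j ≠ i} z_j` for all `i` —
iff `ψ⁵ = 1`. -/
theorem dworkQuintic_singular_iff (psi : ℂ) :
    (∃ z : Fin 5 → ℂ, z ≠ 0 ∧ dworkQuintic psi z = 0 ∧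
        ∀ i, z i ^ 4 = psi * ∏ j ∈ Finset.univ.erase i, z j) ↔
      psi ^ 5 = 1 := by
  constructor
  · rintro ⟨z, hz, hQ, hgrad⟩
    -- all coordinates are nonzero
    have hzi : ∀ i, z i ≠ 0 := by
      intro k hk
      apply hz
      funext i
      by_cases h : i = k
      · exact h ▸ hk
      · have hgi := hgrad i
        have : k ∈ Finset.univ.erase i :=
          Finset.mem_erase.mpr ⟨fun hh => h hh.symm, Finset.mem_univ k⟩
        rw [Finset.prod_eq_zero this hk, mul_zero] at hgi
        exact pow_eq_zero_iff (by norm_num : (4:ℕ) ≠ 0) |>.mp hgi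
    have hPne : (∏ i, z i) ≠ 0 := Finset.prod_ne_zero_iff.mpr fun i _ => hzi i
    have h5 : ∀ i, z i ^ 5 = psi * ∏ j, z j := by
      intro i
      calc z i ^ 5 = z i * z i ^ 4 := by ring
        _ = z i * (psi * ∏ j ∈ Finset.univ.erase i, z j) := by rw [hgrad i]
        _ = psi * (z i * ∏ j ∈ Finset.univ.erase i, z j) := by ring
        _ = psi * ∏ j, z j := by rw [Finset.mul_prod_erase _ _ (Finset.mem_univ i)]
    have hP : (∏ i, z i) ^ 5 = psi ^ 5 * (∏ i, z i) ^ 5 := by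
      calc (∏ i, z i) ^ 5 = ∏ i, z i ^ 5 := (Finset.prod_pow _ _ _).symm
        _ = ∏ _i : Fin 5, (psi * ∏ j, z j) := Finset.prod_congr rfl fun i _ => h5 i
        _ = (psi * ∏ j, z j) ^ 5 := by
            rw [Finset.prod_const, Finset.card_univ, Fintype.card_fin]
        _ = psi ^ 5 * (∏ i, z i) ^ 5 := by ring
    have hPne5 : (∏ i, z i) ^ 5 ≠ 0 := pow_ne_zero _ hPne
    have : psi ^ 5 * (∏ i, z i) ^ 5 = 1 * (∏ i, z i) ^ 5 := by
      rw [← hP, one_mul]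
    exact mul_right_cancel₀ hPne5 this
  · intro h
    refine ⟨fun i => if i = 0 then psi ^ 4 else 1, ?_, ?_, ?_⟩
    · intro hh
      have := congrFun hh 1
      simp at this
    · simp only [dworkQuintic, Fin.sum_univ_five, Fin.prod_univ_five]
      simp only [show ((1:Fin 5) = 0) = False by decide,
        show ((2:Fin 5) = 0) = False by decide,
        show ((3:Fin 5) = 0) = False by decide,
        show ((4:Fin 5) = 0) = False by decide,
        if_true, if_false, if_pos rfl]
      linear_combination (psi ^ 15 + psi ^ 10 + psi ^ 5 - 4) * h
    · intro i
      by_cases hi : i = 0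
      · subst hi
        have hprod : (∏ j ∈ Finset.univ.erase (0 : Fin 5),
            (fun i => if i = 0 then psi ^ 4 else (1:ℂ)) j) = 1 := by
          apply Finset.prod_eq_one
          intro j hj
          simp [Finset.ne_of_mem_erase hj]
        simp only [hprod, if_pos rfl, if_true, eq_self_iff_true, mul_one]
        linear_combination (psi ^ 11 + psi ^ 6 + psi) * h
      · have key : (∏ j ∈ Finset.univ.erase i,
            (fun k => if k = 0 then psi ^ 4 else (1:ℂ)) j) = psi ^ 4 := by
          have h2 := Finset.mul_prod_erase Finset.univ
            (fun k => if k = 0 then psi ^ 4 else (1:ℂ)) (Finset.mem_univ i)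
          simp only [if_neg hi, one_mul] at h2
          rw [h2, Fin.prod_univ_five]
          simp only [show ((1:Fin 5) = 0) = False by decide,
            show ((2:Fin 5) = 0) = False by decide,
            show ((3:Fin 5) = 0) = False by decide,
            show ((4:Fin 5) = 0) = False by decide,
            if_false, if_true, if_pos rfl, eq_self_iff_true, mul_one]
        simp only [key, if_neg hi, one_pow]
        linear_combination -h
end
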